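/- In type C_n (n ≥ 2), the vectors w₁ = v₁⊗v₁, w₂ = v₁⊗v₂ − r v₂⊗v₁, and w₃ = Σ_{i=1}^{n} (r^{i−1} v_i⊗v_{i'} − r^{n} s^{i−n−1} v_{i'}⊗v_i) are highest weight vectors: for every 1 ≤ i ≤ n, the operator Δe_i := e_i ⊗ Id + ω_i ⊗ e_i on V ⊗ V annihilates w₁, w₂, and w₃. -/

import Mathlib

/-!
On a pure tensor, `Δ(e_i)(x ⊗ y) = e_i x ⊗ y + ω_i x ⊗ e_i y`, and `e_i`, `ω_i` act on the basis by
explicit formulas. `e_i` kills `v_1` (and `v_2` unless `i = 1`), which settles `w₁` and `w₂`. In `w₃`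
only the summands `k = i, i + 1` survive when `i < n`, and they cancel because `ω_i` scales `v_i` by
`r` and `v_{(i+1)'}` by `s⁻¹`, the ratios of consecutive coefficients of `w₃`; when `i = n` only
`k = n` survives, and `ω_n v_n = r s⁻¹ v_n` makes its two halves cancel.
-/

open Finset Matrix Kronecker

namespace TwoParamQG

variable {K : Type*} [Field K]

/-- The `N × N` matrix unit `E_{i j}` (with 1-based indices `i, j`). -/
def Eu (N i j : ℕ) : Matrix (Fin N) (Fin N) K :=
  Matrix.of fun a b => if ((a : ℕ) + 1 = i ∧ (b : ℕ) + 1 = j) then (1 : K) else 0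

/-- Standard basis vector `v_i` of `K^N` (1-based index `i`). -/
def bv (N i : ℕ) : Fin N → K := fun a => if (a : ℕ) + 1 = i then (1 : K) else 0

/-- The tensor `v_i ⊗ v_j` in `K^N ⊗ K^N`. -/
def bvv (N i j : ℕ) : Fin N × Fin N → K := fun p => bv N i p.1 * bv N j p.2

/-- `i ↦ i' = N + 1 - i` for `N = 2n` (type `C_n`). -/
def pC (n i : ℕ) : ℕ := 2 * n + 1 - i

/-- Type `C_n` generator matrix `e_i` on `K^{2n}`. -/
def eC (n i : ℕ) : Matrix (Fin (2 * n)) (Fin (2 * n)) K :=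
  if i = n then Eu (2 * n) n (pC n n)
  else Eu (2 * n) i (i + 1) - Eu (2 * n) (pC n (i + 1)) (pC n i)

/-- Type `C_n` generator matrix `f_i` on `K^{2n}`. -/
def fC (n : ℕ) (r s : K) (i : ℕ) : Matrix (Fin (2 * n)) (Fin (2 * n)) K :=
  if i = n then (r * s)⁻¹ • Eu (2 * n) (pC n n) n
  else Eu (2 * n) (i + 1) i - (r * s)⁻¹ • Eu (2 * n) (pC n i) (pC n (i + 1))

/-- Type `C_n` generator matrix `ω_i` on `K^{2n}`. -/
def ωC (n : ℕ) (r s : K) (i : ℕ) : Matrix (Fin (2 * n)) (Fin (2 * n)) K :=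
  if i = n then
    (r * s⁻¹) • Eu (2 * n) n n + (r⁻¹ * s) • Eu (2 * n) (pC n n) (pC n n)
      + (∑ j ∈ Finset.Icc 1 (n - 1),
          ((r⁻¹ * s⁻¹) • Eu (2 * n) j j + (r * s) • Eu (2 * n) (pC n j) (pC n j)))
  else
    r • Eu (2 * n) i i + s • Eu (2 * n) (i + 1) (i + 1)
      + r⁻¹ • Eu (2 * n) (pC n i) (pC n i) + s⁻¹ • Eu (2 * n) (pC n (i + 1)) (pC n (i + 1))
      + (∑ j ∈ (Finset.Icc 1 n).filter (fun j => j ≠ i ∧ j ≠ i + 1),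
          (Eu (2 * n) j j + Eu (2 * n) (pC n j) (pC n j)))

/-- Type `C_n` generator matrix `ω'_i` on `K^{2n}`. -/
def ω'C (n : ℕ) (r s : K) (i : ℕ) : Matrix (Fin (2 * n)) (Fin (2 * n)) K :=
  if i = n then
    (r⁻¹ * s) • Eu (2 * n) n n + (r * s⁻¹) • Eu (2 * n) (pC n n) (pC n n)
      + (∑ j ∈ Finset.Icc 1 (n - 1),
          ((r⁻¹ * s⁻¹) • Eu (2 * n) j j + (r * s) • Eu (2 * n) (pC n j) (pC n j)))
  else
    s • Eu (2 * n) i i + r • Eu (2 * n) (i + 1) (i + 1)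
      + s⁻¹ • Eu (2 * n) (pC n i) (pC n i) + r⁻¹ • Eu (2 * n) (pC n (i + 1)) (pC n (i + 1))
      + (∑ j ∈ (Finset.Icc 1 n).filter (fun j => j ≠ i ∧ j ≠ i + 1),
          (Eu (2 * n) j j + Eu (2 * n) (pC n j) (pC n j)))

def vecTensor {m p : Type*} (x : m → K) (y : p → K) : m × p → K := fun q => x q.1 * y q.2

lemma bvv_eq_vecTensor (N i j : ℕ) : bvv N i j = vecTensor (bv N i) (bv (K := K) N j) := rfl

section vecTensor

variable {m p : Type*}

@[simp] lemma vecTensor_zero_left (y : p → K) : vecTensor (0 : m → K) y = 0 := by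
  ext; simp [vecTensor]

@[simp] lemma vecTensor_zero_right (x : m → K) : vecTensor x (0 : p → K) = 0 := by
  ext; simp [vecTensor]

@[simp] lemma vecTensor_smul_left (c : K) (x : m → K) (y : p → K) :
    vecTensor (c • x) y = c • vecTensor x y := by
  ext; simp [vecTensor, mul_assoc]

@[simp] lemma vecTensor_neg_left (x : m → K) (y : p → K) :
    vecTensor (-x) y = -vecTensor x y := by
  ext; simp [vecTensor]

@[simp] lemma vecTensor_neg_right (x : m → K) (y : p → K) :
    vecTensor x (-y) = -vecTensor x y := by
  ext; simp [vecTensor]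

lemma kronecker_mulVec_vecTensor [Fintype m] [Fintype p] {l q : Type*}
    (A : Matrix l m K) (B : Matrix q p K) (x : m → K) (y : p → K) :
    (A ⊗ₖ B) *ᵥ vecTensor x y = vecTensor (A *ᵥ x) (B *ᵥ y) := by
  ext ⟨a, b⟩
  simp only [mulVec, dotProduct, kroneckerMap_apply, vecTensor, Finset.sum_mul_sum,
    Fintype.sum_prod_type]
  exact Finset.sum_congr rfl fun _ _ => Finset.sum_congr rfl fun _ _ => by ring

end vecTensor

lemma Eu_mulVec_bv_of_ne {N a b k : ℕ} (h : b ≠ k) :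
    (Eu N a b : Matrix (Fin N) (Fin N) K) *ᵥ bv N k = 0 := by
  ext x
  simp only [mulVec, dotProduct, Eu, bv, of_apply, Pi.zero_apply]
  exact Finset.sum_eq_zero fun y _ => by split_ifs <;> simp_all

lemma Eu_mulVec_bv_self {N a b : ℕ} (h1 : 1 ≤ b) (h2 : b ≤ N) :
    (Eu N a b : Matrix (Fin N) (Fin N) K) *ᵥ bv N b = bv N a := by
  ext x
  simp only [mulVec, dotProduct, Eu, bv, of_apply]
  rw [Finset.sum_eq_single (⟨b - 1, by omega⟩ : Fin N)]
  · split_ifs <;> simp_all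
  · intro y _ hy
    have : (y : ℕ) + 1 ≠ b := fun hc => hy (Fin.ext (by simp; omega))
    simp [this]
  · simp

section generators

variable {n : ℕ}

lemma eC_mulVec_bv_of_lt {i k : ℕ} (hin : i < n) (hk1 : 1 ≤ k) (hk : k ≤ n) :
    (eC n i : Matrix (Fin (2 * n)) (Fin (2 * n)) K) *ᵥ bv (2 * n) k
      = if k = i + 1 then bv (2 * n) i else 0 := by
  rw [eC, if_neg hin.ne, sub_mulVec,
    Eu_mulVec_bv_of_ne (a := pC n (i + 1)) (by simp only [pC]; omega), sub_zero]
  split_ifs with h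
  · subst h; exact Eu_mulVec_bv_self (by omega) (by omega)
  · exact Eu_mulVec_bv_of_ne (Ne.symm h)

lemma eC_mulVec_bv_pC_of_lt {i k : ℕ} (hin : i < n) (hk1 : 1 ≤ k) (hk : k ≤ n) :
    (eC n i : Matrix (Fin (2 * n)) (Fin (2 * n)) K) *ᵥ bv (2 * n) (pC n k)
      = if k = i then -bv (2 * n) (pC n (i + 1)) else 0 := by
  rw [eC, if_neg hin.ne, sub_mulVec, Eu_mulVec_bv_of_ne (by simp only [pC]; omega), zero_sub]
  split_ifs with h
  · subst h; rw [Eu_mulVec_bv_self (by simp only [pC]; omega) (by simp only [pC]; omega)]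
  · rw [Eu_mulVec_bv_of_ne (by simp only [pC]; omega), neg_zero]

lemma eC_last_mulVec_bv {k : ℕ} (hk : k ≤ n) :
    (eC n n : Matrix (Fin (2 * n)) (Fin (2 * n)) K) *ᵥ bv (2 * n) k = 0 := by
  rw [eC, if_pos rfl, Eu_mulVec_bv_of_ne (by simp only [pC]; omega)]

lemma eC_last_mulVec_bv_pC {k : ℕ} (hk1 : 1 ≤ k) (hk : k ≤ n) :
    (eC n n : Matrix (Fin (2 * n)) (Fin (2 * n)) K) *ᵥ bv (2 * n) (pC n k)
      = if k = n then bv (2 * n) n else 0 := by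
  rw [eC, if_pos rfl]
  split_ifs with h
  · subst h; exact Eu_mulVec_bv_self (by simp only [pC]; omega) (by simp only [pC]; omega)
  · exact Eu_mulVec_bv_of_ne (by simp only [pC]; omega)

lemma eC_mulVec_bv_one {i : ℕ} (hi : 1 ≤ i) (hin : i ≤ n) :
    (eC n i : Matrix (Fin (2 * n)) (Fin (2 * n)) K) *ᵥ bv (2 * n) 1 = 0 := by
  rcases hin.lt_or_eq with hin | rfl
  · rw [eC_mulVec_bv_of_lt hin le_rfl (by omega), if_neg (by omega)]
  · exact eC_last_mulVec_bv hi

lemma ωC_mulVec_bv_self_of_lt {i : ℕ} (r s : K) (hi : 1 ≤ i) (hin : i < n) :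
    ωC n r s i *ᵥ bv (2 * n) i = r • bv (2 * n) i := by
  rw [ωC, if_neg hin.ne]
  simp only [add_mulVec, smul_mulVec, sum_mulVec]
  rw [Eu_mulVec_bv_self hi (by omega), Eu_mulVec_bv_of_ne (by omega),
    Eu_mulVec_bv_of_ne (by simp only [pC]; omega), Eu_mulVec_bv_of_ne (by simp only [pC]; omega),
    Finset.sum_eq_zero fun j hj => by
      simp only [Finset.mem_filter, Finset.mem_Icc] at hj
      rw [Eu_mulVec_bv_of_ne (by omega), Eu_mulVec_bv_of_ne (by simp only [pC]; omega), add_zero]]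
  simp

lemma ωC_mulVec_bv_pC_succ_of_lt {i : ℕ} (r s : K) (hi : 1 ≤ i) (hin : i < n) :
    ωC n r s i *ᵥ bv (2 * n) (pC n (i + 1)) = s⁻¹ • bv (2 * n) (pC n (i + 1)) := by
  rw [ωC, if_neg hin.ne]
  simp only [add_mulVec, smul_mulVec, sum_mulVec]
  rw [Eu_mulVec_bv_of_ne (by simp only [pC]; omega), Eu_mulVec_bv_of_ne (by simp only [pC]; omega),
    Eu_mulVec_bv_of_ne (by simp only [pC]; omega),
    Eu_mulVec_bv_self (by simp only [pC]; omega) (by simp only [pC]; omega),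
    Finset.sum_eq_zero fun j hj => by
      simp only [Finset.mem_filter, Finset.mem_Icc] at hj
      rw [Eu_mulVec_bv_of_ne (by simp only [pC]; omega),
        Eu_mulVec_bv_of_ne (by simp only [pC]; omega), add_zero]]
  simp

lemma ωC_last_mulVec_bv_self (r s : K) (hn : 1 ≤ n) :
    ωC n r s n *ᵥ bv (2 * n) n = (r * s⁻¹) • bv (2 * n) n := by
  rw [ωC, if_pos rfl]
  simp only [add_mulVec, smul_mulVec, sum_mulVec]
  rw [Eu_mulVec_bv_self hn (by omega), Eu_mulVec_bv_of_ne (by simp only [pC]; omega),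
    Finset.sum_eq_zero fun j hj => by
      simp only [Finset.mem_Icc] at hj
      rw [Eu_mulVec_bv_of_ne (by omega), Eu_mulVec_bv_of_ne (by simp only [pC]; omega),
        smul_zero, smul_zero, add_zero]]
  simp

end generators

def coprodE (n : ℕ) (r s : K) (i : ℕ) :
    Matrix (Fin (2 * n) × Fin (2 * n)) (Fin (2 * n) × Fin (2 * n)) K :=
  eC n i ⊗ₖ 1 + ωC n r s i ⊗ₖ eC n i

lemma coprodE_mulVec_bvv (n : ℕ) (r s : K) (i k l : ℕ) :
    coprodE n r s i *ᵥ bvv (2 * n) k l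
      = vecTensor (eC n i *ᵥ bv (2 * n) k) (bv (2 * n) l)
        + vecTensor (ωC n r s i *ᵥ bv (2 * n) k) (eC n i *ᵥ bv (2 * n) l) := by
  rw [coprodE, add_mulVec, bvv_eq_vecTensor, kronecker_mulVec_vecTensor,
    kronecker_mulVec_vecTensor, one_mulVec]


lemma coprodE_mulVec_bvv_one_one {n i : ℕ} (r s : K) (hi : 1 ≤ i) (hin : i ≤ n) :
    coprodE n r s i *ᵥ bvv (2 * n) 1 1 = 0 := by
  rw [coprodE_mulVec_bvv, eC_mulVec_bv_one hi hin]
  simp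

lemma coprodE_mulVec_bvv_one_two_sub {n i : ℕ} (r s : K) (hn : 2 ≤ n) (hi : 1 ≤ i) (hin : i ≤ n) :
    coprodE n r s i *ᵥ (bvv (2 * n) 1 2 - r • bvv (2 * n) 2 1) = 0 := by
  rw [mulVec_sub, mulVec_smul, coprodE_mulVec_bvv, coprodE_mulVec_bvv, eC_mulVec_bv_one hi hin]
  rcases hin.lt_or_eq with hin | rfl
  · rw [eC_mulVec_bv_of_lt hin (by norm_num) hn]
    split_ifs with h
    · obtain rfl : i = 1 := by omega
      simp [ωC_mulVec_bv_self_of_lt r s le_rfl hin]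
    · simp
  · simp [eC_last_mulVec_bv hn]

def w3Term (n : ℕ) (r s : K) (k : ℕ) : Fin (2 * n) × Fin (2 * n) → K :=
  r ^ (k - 1) • bvv (2 * n) k (pC n k) - (r ^ n * s ^ ((k : ℤ) - n - 1)) • bvv (2 * n) (pC n k) k

lemma coprodE_last_mulVec_w3Term {n k : ℕ} (r s : K) (hk1 : 1 ≤ k) (hk : k ≤ n) :
    coprodE n r s n *ᵥ w3Term n r s k = 0 := by
  rw [w3Term, mulVec_sub, mulVec_smul, mulVec_smul, coprodE_mulVec_bvv, coprodE_mulVec_bvv,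
    eC_last_mulVec_bv hk, eC_last_mulVec_bv_pC hk1 hk]
  split_ifs with h
  · subst h
    have hcoeff : r ^ (k - 1) * (r * s⁻¹) = r ^ k * s ^ ((k : ℤ) - k - 1) := by
      rw [← mul_assoc, ← pow_succ, Nat.sub_add_cancel hk1, sub_self, zero_sub, _root_.zpow_neg_one]
    simp [ωC_last_mulVec_bv_self r s hk1, ← bvv_eq_vecTensor, smul_smul, hcoeff]
  · simp

lemma coprodE_mulVec_w3Term_of_ne {n i k : ℕ} (r s : K) (hin : i < n)
    (hk1 : 1 ≤ k) (hk : k ≤ n) (hki : k ≠ i) (hki' : k ≠ i + 1) :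
    coprodE n r s i *ᵥ w3Term n r s k = 0 := by
  rw [w3Term, mulVec_sub, mulVec_smul, mulVec_smul, coprodE_mulVec_bvv, coprodE_mulVec_bvv,
    eC_mulVec_bv_of_lt hin hk1 hk, eC_mulVec_bv_pC_of_lt hin hk1 hk, if_neg hki, if_neg hki']
  simp

lemma coprodE_mulVec_w3Term_add_w3Term_succ {n i : ℕ} (r s : K) (hs : s ≠ 0) (hi : 1 ≤ i)
    (hin : i < n) :
    coprodE n r s i *ᵥ (w3Term n r s i + w3Term n r s (i + 1)) = 0 := by
  have hr : r ^ (i - 1) * r = r ^ i := by rw [← pow_succ, Nat.sub_add_cancel hi]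
  have hs' : r ^ n * s ^ ((i : ℤ) + 1 - n - 1) * s⁻¹ = r ^ n * s ^ ((i : ℤ) - n - 1) := by
    rw [mul_assoc, ← zpow_sub_one₀ hs]; ring_nf
  simp only [w3Term, mulVec_add, mulVec_sub, mulVec_smul, coprodE_mulVec_bvv,
    eC_mulVec_bv_of_lt hin hi hin.le, eC_mulVec_bv_of_lt hin (by omega : 1 ≤ i + 1) hin,
    eC_mulVec_bv_pC_of_lt hin hi hin.le, eC_mulVec_bv_pC_of_lt hin (by omega : 1 ≤ i + 1) hin,
    ωC_mulVec_bv_self_of_lt r s hi hin, ωC_mulVec_bv_pC_succ_of_lt r s hi hin]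
  simp [smul_smul, hr, hs']

lemma coprodE_mulVec_sum_w3Term {n i : ℕ} (r s : K) (hs : s ≠ 0) (hi : 1 ≤ i) (hin : i ≤ n) :
    coprodE n r s i *ᵥ ∑ k ∈ Finset.Icc 1 n, w3Term n r s k = 0 := by
  rw [mulVec_sum]
  rcases hin.lt_or_eq with hin | rfl
  · rw [← Finset.sum_subset (s₁ := {i, i + 1}), Finset.sum_pair (by omega), ← mulVec_add,
      coprodE_mulVec_w3Term_add_w3Term_succ r s hs hi hin]
    · intro k hk
      simp only [Finset.mem_insert, Finset.mem_singleton, Finset.mem_Icc] at hk ⊢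
      omega
    · intro k hk hk'
      simp only [Finset.mem_insert, Finset.mem_singleton, Finset.mem_Icc, not_or] at hk hk'
      exact coprodE_mulVec_w3Term_of_ne r s hin hk.1 hk.2 hk'.1 hk'.2
  · exact Finset.sum_eq_zero fun k hk =>
      coprodE_last_mulVec_w3Term r s (Finset.mem_Icc.1 hk).1 (Finset.mem_Icc.1 hk).2

theorem typeC_highest_weight_vectors_general
    (n : ℕ) (hn : 2 ≤ n) (r s : K) (hs : s ≠ 0)
    (i : ℕ) (hi1 : 1 ≤ i) (hi2 : i ≤ n) :
    (eC n i ⊗ₖ (1 : Matrix (Fin (2 * n)) (Fin (2 * n)) K)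
        + ωC n r s i ⊗ₖ eC n i).mulVec (bvv (2 * n) 1 1) = 0 ∧
    (eC n i ⊗ₖ (1 : Matrix (Fin (2 * n)) (Fin (2 * n)) K)
        + ωC n r s i ⊗ₖ eC n i).mulVec
        (bvv (2 * n) 1 2 - r • bvv (2 * n) 2 1) = 0 ∧
    (eC n i ⊗ₖ (1 : Matrix (Fin (2 * n)) (Fin (2 * n)) K)
        + ωC n r s i ⊗ₖ eC n i).mulVec
        (∑ k ∈ Finset.Icc 1 n,
          ((r ^ (k - 1)) • bvv (2 * n) k (pC n k)
            - (r ^ n * s ^ ((k : ℤ) - (n : ℤ) - 1)) • bvv (2 * n) (pC n k) k)) = 0 :=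
  ⟨coprodE_mulVec_bvv_one_one r s hi1 hi2, coprodE_mulVec_bvv_one_two_sub r s hn hi1 hi2,
    coprodE_mulVec_sum_w3Term r s hs hi1 hi2⟩

theorem typeC_highest_weight_vectors
    (n : ℕ) (hn : 2 ≤ n) (r s : K) (hr : r ≠ 0) (hs : s ≠ 0) (hrs : r ^ 2 ≠ s ^ 2)
    (i : ℕ) (hi1 : 1 ≤ i) (hi2 : i ≤ n) :
    (eC n i ⊗ₖ (1 : Matrix (Fin (2 * n)) (Fin (2 * n)) K)
        + ωC n r s i ⊗ₖ eC n i).mulVec (bvv (2 * n) 1 1) = 0 ∧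
    (eC n i ⊗ₖ (1 : Matrix (Fin (2 * n)) (Fin (2 * n)) K)
        + ωC n r s i ⊗ₖ eC n i).mulVec
        (bvv (2 * n) 1 2 - r • bvv (2 * n) 2 1) = 0 ∧
    (eC n i ⊗ₖ (1 : Matrix (Fin (2 * n)) (Fin (2 * n)) K)
        + ωC n r s i ⊗ₖ eC n i).mulVec
        (∑ k ∈ Finset.Icc 1 n,
          ((r ^ (k - 1)) • bvv (2 * n) k (pC n k)
            - (r ^ n * s ^ ((k : ℤ) - (n : ℤ) - 1)) • bvv (2 * n) (pC n k) k)) = 0 :=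
  typeC_highest_weight_vectors_general n hn r s hs i hi1 hi2

end TwoParamQG
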